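/- Let ε ∈ ℝ and let a, b be positive twice differentiable functions on a real interval I satisfying the orthogonal vacuum system with |Λ| = 1 and parameter ε. Define H := a'/a + 2b'/b and σ := a'/a − 2b'/b on I. Then for all t ∈ I: H'(t) = −1 − (1/4)·H(t)σ(t) − (3/8)·(H(t)² + σ(t)²), σ'(t) = −1 − (3/4)·H(t)σ(t) − (5/8)·H(t)² + (3/8)·σ(t)², and 1 + (5/16)·H(t)² − (3/16)·σ(t)² − (1/8)·H(t)σ(t) = −ε/b(t)². In particular this last quantity is positive when ε = −1, zero when ε = 0, and negative when ε = 1. -/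

import Mathlib

open Real Set

/-!
In terms of the logarithmic derivatives `x = a'/a` and `y = b'/b`, the system becomes the
first-order system `x' = -1 - 2xy - x²`, `y' = -1 - ε/b² - xy - 2y²` with constraint
`0 = 1 + ε/b² + y² + 2xy`. Since `H = x + 2y` and `σ = x - 2y`, each claimed identity is this
system plus a multiple of the constraint.
-/

theorem hasDerivAt_logDeriv {𝕜 : Type*} [NontriviallyNormedField 𝕜] {f : 𝕜 → 𝕜} {x : 𝕜}
    (hf : DifferentiableAt 𝕜 f x) (hf' : DifferentiableAt 𝕜 (deriv f) x) (hx : f x ≠ 0) :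
    HasDerivAt (logDeriv f) (deriv (deriv f) x / f x - logDeriv f x ^ 2) x :=
  (hf'.hasDerivAt.div hf.hasDerivAt hx).congr_deriv <| by
    rw [logDeriv_apply]
    field_simp

section OrthogonalVacuum

variable {a b : ℝ → ℝ} {ε t : ℝ}

theorem orthogonalVacuum_hasDerivAt_logDeriv_a (ha : a t ≠ 0) (hb : b t ≠ 0)
    (hda : DifferentiableAt ℝ a t) (hdda : DifferentiableAt ℝ (deriv a) t)
    (heqa : deriv (deriv a) t = -a t - 2 * deriv a t * deriv b t / b t) :
    HasDerivAt (logDeriv a) (-1 - 2 * logDeriv a t * logDeriv b t - logDeriv a t ^ 2) t :=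
  (hasDerivAt_logDeriv hda hdda ha).congr_deriv <| by
    rw [heqa]
    simp only [logDeriv_apply]
    field_simp

theorem orthogonalVacuum_hasDerivAt_logDeriv_b (ha : a t ≠ 0) (hb : b t ≠ 0)
    (hdb : DifferentiableAt ℝ b t) (hddb : DifferentiableAt ℝ (deriv b) t)
    (heqb : deriv (deriv b) t
      = -(deriv b t) ^ 2 / b t - b t - ε / b t - deriv a t * deriv b t / a t) :
    HasDerivAt (logDeriv b)
      (-1 - ε / b t ^ 2 - logDeriv a t * logDeriv b t - 2 * logDeriv b t ^ 2) t :=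
  (hasDerivAt_logDeriv hdb hddb hb).congr_deriv <| by
    rw [heqb]
    simp only [logDeriv_apply]
    field_simp
    ring

theorem orthogonalVacuum_constraint_logDeriv
    (hconstr : (0 : ℝ) = 1 + ε / (b t) ^ 2
      + (deriv b t) ^ 2 / (b t) ^ 2 + 2 * deriv b t * deriv a t / (b t * a t)) :
    0 = 1 + ε / b t ^ 2 + logDeriv b t ^ 2 + 2 * logDeriv a t * logDeriv b t := by
  rw [hconstr]
  simp only [logDeriv_apply]
  ring

end OrthogonalVacuum

theorem hubble_shear_system (ε : ℝ) (α β : ℝ) (a b H σ : ℝ → ℝ)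
    (hpos : ∀ t ∈ Set.Ioo α β, 0 < a t ∧ 0 < b t)
    (hdiff : ∀ t ∈ Set.Ioo α β, DifferentiableAt ℝ a t ∧ DifferentiableAt ℝ (deriv a) t ∧
      DifferentiableAt ℝ b t ∧ DifferentiableAt ℝ (deriv b) t)
    (heqb : ∀ t ∈ Set.Ioo α β, deriv (deriv b) t
      = -(deriv b t) ^ 2 / b t - b t - ε / b t - deriv a t * deriv b t / a t)
    (heqa : ∀ t ∈ Set.Ioo α β, deriv (deriv a) t
      = -a t - 2 * deriv a t * deriv b t / b t)
    (hconstr : ∀ t ∈ Set.Ioo α β, (0 : ℝ) = 1 + ε / (b t) ^ 2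
      + (deriv b t) ^ 2 / (b t) ^ 2 + 2 * deriv b t * deriv a t / (b t * a t))
    (hH : H = fun t => deriv a t / a t + 2 * deriv b t / b t)
    (hσ : σ = fun t => deriv a t / a t - 2 * deriv b t / b t) :
    ∀ t ∈ Set.Ioo α β,
      deriv H t = -1 - (1 / 4) * (H t * σ t) - (3 / 8) * ((H t) ^ 2 + (σ t) ^ 2) ∧
      deriv σ t = -1 - (3 / 4) * (H t * σ t) - (5 / 8) * (H t) ^ 2 + (3 / 8) * (σ t) ^ 2 ∧
      1 + (5 / 16) * (H t) ^ 2 - (3 / 16) * (σ t) ^ 2 - (1 / 8) * (H t * σ t)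
        = -ε / (b t) ^ 2 ∧
      (ε = -1 → 0 < 1 + (5 / 16) * (H t) ^ 2 - (3 / 16) * (σ t) ^ 2
          - (1 / 8) * (H t * σ t)) ∧
      (ε = 0 → 1 + (5 / 16) * (H t) ^ 2 - (3 / 16) * (σ t) ^ 2
          - (1 / 8) * (H t * σ t) = 0) ∧
      (ε = 1 → 1 + (5 / 16) * (H t) ^ 2 - (3 / 16) * (σ t) ^ 2
          - (1 / 8) * (H t * σ t) < 0) := by
  intro t ht
  obtain ⟨ha, hb⟩ := hpos t ht
  obtain ⟨hda, hdda, hdb, hddb⟩ := hdiff t ht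
  have hx := orthogonalVacuum_hasDerivAt_logDeriv_a ha.ne' hb.ne' hda hdda (heqa t ht)
  have hy := orthogonalVacuum_hasDerivAt_logDeriv_b ha.ne' hb.ne' hdb hddb (heqb t ht)
  have hc := orthogonalVacuum_constraint_logDeriv (hconstr t ht)
  have hHx : H = fun s => logDeriv a s + 2 * logDeriv b s := by
    simp only [hH, logDeriv_apply, mul_div_assoc]
  have hσx : σ = fun s => logDeriv a s - 2 * logDeriv b s := by
    simp only [hσ, logDeriv_apply, mul_div_assoc]
  have hdH := (hx.add (hy.const_mul 2)).congr_of_eventuallyEq (.of_eq hHx)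
  have hdσ := (hx.sub (hy.const_mul 2)).congr_of_eventuallyEq (.of_eq hσx)
  have key : 1 + (5 / 16) * (H t) ^ 2 - (3 / 16) * (σ t) ^ 2 - (1 / 8) * (H t * σ t)
      = -ε / (b t) ^ 2 := by
    rw [hHx, hσx]
    linear_combination -hc
  refine ⟨?_, ?_, key, fun hε => ?_, fun hε => ?_, fun hε => ?_⟩
  · rw [hdH.deriv, hHx, hσx]
    linear_combination 2 * hc
  · rw [hdσ.deriv, hHx, hσx]
    linear_combination -2 * hc
  · rw [key, hε, neg_neg]
    positivity
  · rw [key, hε, neg_zero, zero_div]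
  · rw [key, hε, neg_div]
    exact neg_neg_of_pos (by positivity)
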